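/- Restricted to the orthogonal complement E = (ker L)^⊥ in L²(ℝ) (intersected with the domain H²(ℝ)), the operator L = ∂_xx + (1 - 2 tanh² x) is negative: there exists c > 0 such that ⟨-Lf, f⟩_{L²} ≥ c ‖f‖²_{L²} for all f ∈ E ∩ H²(ℝ). -/

import Mathlib

open Real MeasureTheory Set Filter Topology

noncomputable section

namespace LNegAux

lemma cosh_ne (x : ℝ) : Real.cosh x ≠ 0 := (Real.cosh_pos x).ne'

lemma abs_tanh_le (x : ℝ) : |Real.tanh x| ≤ 1 := by
  rw [Real.tanh_eq_sinh_div_cosh, abs_div, abs_of_pos (Real.cosh_pos x),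
    div_le_one (Real.cosh_pos x)]
  rcases abs_cases (Real.sinh x) with ⟨h, _⟩ | ⟨h, _⟩
  · rw [h]; exact (Real.sinh_lt_cosh x).le
  · rw [h]
    have := Real.sinh_lt_cosh (-x)
    rw [Real.sinh_neg, Real.cosh_neg] at this
    linarith

lemma sech_le (x : ℝ) : 1 / Real.cosh x ≤ 2 * Real.exp (-x) := by
  rw [Real.cosh_eq, div_le_iff₀ (by positivity)]
  have h1 : Real.exp (-x) * Real.exp x = 1 := by
    rw [← Real.exp_add]; simp
  nlinarith [Real.exp_pos (-x), Real.exp_pos x]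

lemma integrable_mul_L2 {f g : ℝ → ℝ} (hf : MemLp f 2 (volume : Measure ℝ))
    (hg : MemLp g 2 (volume : Measure ℝ)) :
    Integrable (fun x => f x * g x) := by
  have hi : Integrable (fun x => (f x ^ 2 + g x ^ 2) / 2) :=
    (hf.integrable_sq.add hg.integrable_sq).div_const 2
  refine hi.mono' (hf.aestronglyMeasurable.mul hg.aestronglyMeasurable)
    (Filter.Eventually.of_forall fun x => ?_)
  rw [Real.norm_eq_abs, abs_mul]
  nlinarith [sq_nonneg (|f x| - |g x|), abs_nonneg (f x), abs_nonneg (g x),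
    sq_abs (f x), sq_abs (g x)]

lemma cont_sech : Continuous (fun x : ℝ => 1 / Real.cosh x) :=
  continuous_const.div Real.continuous_cosh cosh_ne

lemma integrable_sech_sq : Integrable (fun x : ℝ => (1 / Real.cosh x) ^ 2) := by
  have hIoi : IntegrableOn (fun x : ℝ => (1 / Real.cosh x) ^ 2) (Ioi 0) volume := by
    have hb : IntegrableOn (fun x : ℝ => 4 * Real.exp (-2 * x)) (Ioi 0) volume :=
      (exp_neg_integrableOn_Ioi 0 two_pos).const_mul 4
    refine hb.mono' (cont_sech.pow 2).aestronglyMeasurable.restrict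
      (Filter.Eventually.of_forall fun x => ?_)
    have h := sech_le x
    have h0 : (0:ℝ) ≤ 1 / Real.cosh x := by positivity
    have h2 : (1 / Real.cosh x) ^ 2 ≤ (2 * Real.exp (-x)) ^ 2 := by
      exact pow_le_pow_left₀ h0 h 2
    have h3 : (2 * Real.exp (-x)) ^ 2 = 4 * Real.exp (-2 * x) := by
      rw [show (-2:ℝ) * x = -x + -x by ring, Real.exp_add]; ring
    rw [Real.norm_eq_abs, abs_of_nonneg (by positivity)]
    linarith [h2, h3.le]
  have hIic : IntegrableOn (fun x : ℝ => (1 / Real.cosh x) ^ 2) (Iic 0) volume := by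
    rw [← Measure.map_neg_eq_self (volume : Measure ℝ)]
    have m : MeasurableEmbedding fun x : ℝ => -x :=
      (Homeomorph.neg ℝ).measurableEmbedding
    rw [m.integrableOn_map_iff]
    simp_rw [Function.comp_def, Real.cosh_neg, neg_preimage, neg_Iic, neg_zero]
    exact (integrableOn_Ici_iff_integrableOn_Ioi).mpr hIoi
  rw [← integrableOn_univ, ← Iic_union_Ioi (a := (0:ℝ)), integrableOn_union]
  exact ⟨hIic, hIoi⟩

lemma memLp_sech : MemLp (fun x : ℝ => 1 / Real.cosh x) 2 (volume : Measure ℝ) :=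
  (memLp_two_iff_integrable_sq cont_sech.aestronglyMeasurable).2 integrable_sech_sq

lemma limit_zero_atTop {h : ℝ → ℝ} (hi : Integrable h) {l : ℝ}
    (ht : Tendsto h atTop (𝓝 l)) : l = 0 := by
  by_contra hl
  have habs : Tendsto (fun x => |h x|) atTop (𝓝 |l|) := ht.abs
  have hev : ∀ᶠ x in atTop, |l| / 2 ≤ |h x| :=
    habs.eventually (eventually_ge_nhds (half_lt_self (abs_pos.mpr hl)))
  obtain ⟨a, ha⟩ := eventually_atTop.mp hev
  have hconst : IntegrableOn (fun _ : ℝ => |l| / 2) (Ioi a) volume := by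
    refine (hi.abs.integrableOn).mono' aestronglyMeasurable_const ?_
    refine (ae_restrict_iff' measurableSet_Ioi).2 (Filter.Eventually.of_forall fun x hx => ?_)
    rw [Real.norm_eq_abs, abs_of_nonneg (by positivity)]
    exact ha x hx.le
  rw [integrableOn_const_iff] at hconst
  rcases hconst with hc | hc
  · exact hl (by simpa using hc)
  · simp [Real.volume_Ioi] at hc

lemma limit_zero_atBot {h : ℝ → ℝ} (hi : Integrable h) {l : ℝ}
    (ht : Tendsto h atBot (𝓝 l)) : l = 0 := by
  have hi' : Integrable (fun x => h (-x)) := hi.comp_neg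
  have ht' : Tendsto (fun x => h (-x)) atTop (𝓝 l) :=
    ht.comp tendsto_neg_atTop_atBot
  exact limit_zero_atTop hi' ht'

lemma tendsto_zero_of_deriv_integrable {h h' : ℝ → ℝ}
    (hd : ∀ x, HasDerivAt h (h' x) x) (hc : Continuous h')
    (hi : Integrable h) (hi' : Integrable h') :
    Tendsto h atTop (𝓝 0) ∧ Tendsto h atBot (𝓝 0) := by
  have key : ∀ x : ℝ, h x = h 0 + ∫ t in (0:ℝ)..x, h' t := by
    intro x
    rw [intervalIntegral.integral_eq_sub_of_hasDerivAt (fun t _ => hd t)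
      (hc.intervalIntegrable _ _)]
    ring
  constructor
  · have T : Tendsto (fun x : ℝ => h 0 + ∫ t in (0:ℝ)..x, h' t) atTop
        (𝓝 (h 0 + ∫ t in Ioi (0:ℝ), h' t)) :=
      tendsto_const_nhds.add
        (intervalIntegral_tendsto_integral_Ioi 0 hi'.integrableOn tendsto_id)
    have T' : Tendsto h atTop (𝓝 (h 0 + ∫ t in Ioi (0:ℝ), h' t)) :=
      T.congr (fun x => (key x).symm)
    have := limit_zero_atTop hi T'
    rwa [this] at T'
  · have key' : ∀ x : ℝ, h x = h 0 - ∫ t in x..(0:ℝ), h' t := by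
      intro x
      rw [intervalIntegral.integral_symm]
      rw [key x]; ring
    have T : Tendsto (fun x : ℝ => h 0 - ∫ t in x..(0:ℝ), h' t) atBot
        (𝓝 (h 0 - ∫ t in Iic (0:ℝ), h' t)) :=
      tendsto_const_nhds.sub
        (intervalIntegral_tendsto_integral_Iic 0 hi'.integrableOn tendsto_id)
    have T' : Tendsto h atBot (𝓝 (h 0 - ∫ t in Iic (0:ℝ), h' t)) :=
      T.congr (fun x => (key' x).symm)
    have := limit_zero_atBot hi T'
    rwa [this] at T'

lemma tendsto_zero_of_L2 {f : ℝ → ℝ} (hf : ContDiff ℝ 1 f)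
    (h2 : MemLp f 2 (volume : Measure ℝ)) (h2' : MemLp (deriv f) 2 (volume : Measure ℝ)) :
    Tendsto f atTop (𝓝 0) ∧ Tendsto f atBot (𝓝 0) := by
  have hdiff : Differentiable ℝ f := hf.differentiable one_ne_zero
  have hd : ∀ x, HasDerivAt (fun y => f y ^ 2) (2 * f x * deriv f x) x := by
    intro x
    have := ((hdiff x).hasDerivAt).fun_pow 2
    simpa [mul_comm, mul_assoc] using this
  have hc : Continuous (fun x => 2 * f x * deriv f x) := by
    exact (continuous_const.mul hf.continuous).mul (hf.continuous_deriv le_rfl)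
  have hsq : Tendsto (fun x => f x ^ 2) atTop (𝓝 0) ∧
      Tendsto (fun x => f x ^ 2) atBot (𝓝 0) := by
    refine tendsto_zero_of_deriv_integrable hd hc h2.integrable_sq ?_
    have : Integrable (fun x => f x * deriv f x) := integrable_mul_L2 h2 h2'
    simpa [mul_assoc] using this.const_mul 2
  have habs : ∀ l : Filter ℝ, Tendsto (fun x => f x ^ 2) l (𝓝 0) → Tendsto f l (𝓝 0) := by
    intro l hl
    have h1 : Tendsto (fun x => |f x|) l (𝓝 0) := by
      have : Tendsto (fun x => Real.sqrt (f x ^ 2)) l (𝓝 (Real.sqrt 0)) :=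
        (Real.continuous_sqrt.tendsto 0).comp hl
      simpa [Real.sqrt_sq_eq_abs] using this
    have h1' : Tendsto (fun x => -|f x|) l (𝓝 0) := by simpa using h1.neg
    exact tendsto_of_tendsto_of_tendsto_of_le_of_le h1' h1
      (fun x => neg_abs_le _) (fun x => le_abs_self _)
  exact ⟨habs _ hsq.1, habs _ hsq.2⟩

lemma bound_right {V G e : ℝ} (hex : e ≤ 1) (hex0 : 0 < e) :
    V * G * (1 + e) ≤ 1/2 * V ^ 2 + 2 * G ^ 2 := by
  nlinarith [mul_nonneg (sub_nonneg.mpr hex) (sq_nonneg (V + 2 * G)),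
    mul_nonneg hex0.le (sq_nonneg (V - 2 * G)), sq_nonneg (V - 2 * G)]

lemma bound_left {V G e : ℝ} (hex : e ≤ 1) (hex0 : 0 < e) :
    -(V * G * (1 + e)) ≤ 1/2 * V ^ 2 + 2 * G ^ 2 := by
  nlinarith [mul_nonneg (sub_nonneg.mpr hex) (sq_nonneg (V - 2 * G)),
    mul_nonneg hex0.le (sq_nonneg (V + 2 * G)), sq_nonneg (V + 2 * G)]

lemma hasDerivAt_sech (x : ℝ) :
    HasDerivAt (fun y : ℝ => 1 / Real.cosh y) (-Real.sinh x / Real.cosh x ^ 2) x := by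
  have := (hasDerivAt_const x (1:ℝ)).fun_div (Real.hasDerivAt_cosh x) (cosh_ne x)
  simpa using this

end LNegAux

open LNegAux

set_option maxHeartbeats 1000000 in
/-- Restricted to `E = (ker L)^⊥ ∩ H²(ℝ)`, the operator `L = ∂ₓₓ + (1 - 2 tanh² x)` is
negative: `⟨-Lf, f⟩ ≥ c ‖f‖²_{L²}` for some `c > 0`. -/
theorem L_negative_on_E :
    ∃ c : ℝ, 0 < c ∧
      ∀ f : ℝ → ℝ, ContDiff ℝ 2 f →
        MemLp f 2 (volume : Measure ℝ) →
        MemLp (deriv f) 2 (volume : Measure ℝ) →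
        MemLp (deriv (deriv f)) 2 (volume : Measure ℝ) →
        (∫ x : ℝ, f x * (1 / Real.cosh x)) = 0 →
        c * ∫ x : ℝ, f x ^ 2 ≤
          -∫ x : ℝ, (deriv (deriv f) x + (1 - 2 * Real.tanh x ^ 2) * f x) * f x := by
  refine ⟨1/4, by norm_num, ?_⟩
  intro f hf hL2 hL2' hL2'' horth
  -- basic differentiability
  have hf2 : ContDiff ℝ (1 + 1 : ℕ) f := by exact_mod_cast hf
  have h21 : ContDiff ℝ 1 (deriv f) := by
    have := contDiff_succ_iff_deriv.mp (show ContDiff ℝ ((1:WithTop ℕ∞) + 1) f from hf.of_le (by norm_num))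
    exact this.2.2
  have hdiff : Differentiable ℝ f := hf.differentiable (by norm_num)
  have hdiff1 : Differentiable ℝ (deriv f) := h21.differentiable one_ne_zero
  have hdf : ∀ x, HasDerivAt f (deriv f x) x := fun x => (hdiff x).hasDerivAt
  have hdf1 : ∀ x, HasDerivAt (deriv f) (deriv (deriv f) x) x := fun x => (hdiff1 x).hasDerivAt
  have cf : Continuous f := hf.continuous
  have cf1 : Continuous (deriv f) := h21.continuous
  have cf2 : Continuous (deriv (deriv f)) := h21.continuous_deriv le_rfl
  -- decay at infinity
  obtain ⟨fTop, fBot⟩ := tendsto_zero_of_L2 (hf.of_le (by norm_num)) hL2 hL2'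
  obtain ⟨f1Top, f1Bot⟩ := tendsto_zero_of_L2 h21 hL2' hL2''
  -- the function g = f' + tanh f, written with sinh/cosh
  set g : ℝ → ℝ := fun x => deriv f x + (Real.sinh x / Real.cosh x) * f x with hg_def
  have cg : Continuous g := by
    refine cf1.add (Continuous.mul ?_ cf)
    exact Real.continuous_sinh.div Real.continuous_cosh cosh_ne
  have memg : MemLp g 2 (volume : Measure ℝ) := by
    refine hL2'.add ?_
    refine hL2.of_le_mul (c := 1)
      ((Real.continuous_sinh.div Real.continuous_cosh cosh_ne).mul cf).aestronglyMeasurable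
      (Filter.Eventually.of_forall fun x => ?_)
    rw [Real.norm_eq_abs, Real.norm_eq_abs, abs_mul, one_mul]
    have := abs_tanh_le x
    rw [Real.tanh_eq_sinh_div_cosh] at this
    nlinarith [abs_nonneg (f x), abs_nonneg (Real.sinh x / Real.cosh x)]
  -- v = f - f 0 * sech
  set a : ℝ := f 0 with ha_def
  set v : ℝ → ℝ := fun x => f x - a * (1 / Real.cosh x) with hv_def
  have memv : MemLp v 2 (volume : Measure ℝ) := hL2.sub (memLp_sech.const_mul a)
  have cv : Continuous v := cf.sub (continuous_const.mul cont_sech)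
  set v1 : ℝ → ℝ := fun x => deriv f x + a * (Real.sinh x / Real.cosh x ^ 2) with hv1_def
  have hdv : ∀ x, HasDerivAt v (v1 x) x := by
    intro x
    have h := (hdf x).fun_sub ((hasDerivAt_sech x).const_mul a)
    refine h.congr_deriv ?_
    simp [hv1_def]; ring
  have hgv : ∀ x, g x = v1 x + (Real.sinh x / Real.cosh x) * v x := by
    intro x
    simp only [hg_def, hv1_def, hv_def]
    have hc := cosh_ne x
    field_simp
    ring
  -- integrability collection
  have int_f_sq : Integrable (fun x => f x ^ 2) := hL2.integrable_sq
  have int_g_sq : Integrable (fun x => g x ^ 2) := memg.integrable_sq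
  have int_v_sq : Integrable (fun x => v x ^ 2) := memv.integrable_sq
  have ctanh : Continuous Real.tanh :=
    (Real.continuous_sinh.div Real.continuous_cosh cosh_ne).congr
      (fun x => (Real.tanh_eq_sinh_div_cosh x).symm)
  have mempot : MemLp (fun x => (1 - 2 * Real.tanh x ^ 2) * f x) 2 (volume : Measure ℝ) := by
    refine hL2.of_le_mul (c := 1)
      (((continuous_const.sub (continuous_const.mul (ctanh.pow 2))).mul
        cf).aestronglyMeasurable)
      (Filter.Eventually.of_forall fun x => ?_)
    rw [Real.norm_eq_abs, Real.norm_eq_abs, abs_mul, one_mul]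
    obtain ⟨hT1, hT2⟩ := abs_le.mp (abs_tanh_le x)
    have h2 : |1 - 2 * Real.tanh x ^ 2| ≤ 1 := by
      rw [abs_le]
      constructor <;> nlinarith
    exact mul_le_of_le_one_left (abs_nonneg _) h2
  have int_Phi : Integrable
      (fun x => (deriv (deriv f) x + (1 - 2 * Real.tanh x ^ 2) * f x) * f x) := by
    have h1 := integrable_mul_L2 hL2'' hL2
    have h2 := integrable_mul_L2 mempot hL2
    have := h1.add h2
    refine this.congr (Filter.Eventually.of_forall fun x => ?_)
    simp only [Pi.add_apply]
    ring
  -- Step 1 : ∫ g² = - ∫ Lf·f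
  set W : ℝ → ℝ := fun x => f x * deriv f x + (Real.sinh x / Real.cosh x) * f x ^ 2 with hW_def
  have hdW : ∀ x, HasDerivAt W
      (g x ^ 2 + (deriv (deriv f) x + (1 - 2 * Real.tanh x ^ 2) * f x) * f x) x := by
    intro x
    have h1 : HasDerivAt (fun y => f y * deriv f y)
        (deriv f x * deriv f x + f x * deriv (deriv f) x) x := (hdf x).mul (hdf1 x)
    have htanh : HasDerivAt (fun y => Real.sinh y / Real.cosh y)
        ((Real.cosh x * Real.cosh x - Real.sinh x * Real.sinh x) / Real.cosh x ^ 2) x :=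
      (Real.hasDerivAt_sinh x).div (Real.hasDerivAt_cosh x) (cosh_ne x)
    have h2 : HasDerivAt (fun y => f y ^ 2) (2 * f x * deriv f x) x := by
      simpa [mul_comm, mul_assoc] using (hdf x).fun_pow 2
    have h := h1.fun_add (htanh.fun_mul h2)
    refine h.congr_deriv ?_
    have hc := cosh_ne x
    simp only [hg_def, Real.tanh_eq_sinh_div_cosh]
    field_simp
    ring
  have cPhi : Continuous (fun x => (deriv (deriv f) x + (1 - 2 * Real.tanh x ^ 2) * f x) * f x) :=
    ((cf2.add ((continuous_const.sub (continuous_const.mul (ctanh.pow 2))).mul cf)).mul cf)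
  have FTCW : ∀ b : ℝ, (∫ x in (-b)..b,
      (g x ^ 2 + (deriv (deriv f) x + (1 - 2 * Real.tanh x ^ 2) * f x) * f x)) = W b - W (-b) := by
    intro b
    exact intervalIntegral.integral_eq_sub_of_hasDerivAt (fun x _ => hdW x)
      (((cg.pow 2).add cPhi).intervalIntegrable _ _)
  have hfsqTop : Tendsto (fun x => f x ^ 2) atTop (𝓝 0) := by
    have := fTop.mul fTop; simpa [sq] using this
  have hfsqBot : Tendsto (fun x => f x ^ 2) atBot (𝓝 0) := by
    have := fBot.mul fBot; simpa [sq] using this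
  have Wtend : ∀ l : Filter ℝ, Tendsto f l (𝓝 0) → Tendsto (deriv f) l (𝓝 0) →
      Tendsto (fun x => f x ^ 2) l (𝓝 0) → Tendsto W l (𝓝 0) := by
    intro l h1 h2 h3
    have ha : Tendsto (fun x => f x * deriv f x) l (𝓝 0) := by
      have := h1.mul h2; simpa using this
    have hb : Tendsto (fun x => (Real.sinh x / Real.cosh x) * f x ^ 2) l (𝓝 0) := by
      have h3n : Tendsto (fun x => -f x ^ 2) l (𝓝 0) := by simpa using h3.neg
      refine tendsto_of_tendsto_of_tendsto_of_le_of_le h3n h3 ?_ ?_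
      · intro x
        have h := abs_tanh_le x
        rw [Real.tanh_eq_sinh_div_cosh, abs_le] at h
        nlinarith [sq_nonneg (f x)]
      · intro x
        have h := abs_tanh_le x
        rw [Real.tanh_eq_sinh_div_cosh, abs_le] at h
        nlinarith [sq_nonneg (f x)]
    have := ha.add hb
    simpa [hW_def] using this
  have WTop : Tendsto W atTop (𝓝 0) := Wtend atTop fTop f1Top hfsqTop
  have WBot : Tendsto W atBot (𝓝 0) := Wtend atBot fBot f1Bot hfsqBot
  have T1 : Tendsto (fun b : ℝ => ∫ x in (-b)..b,
      (g x ^ 2 + (deriv (deriv f) x + (1 - 2 * Real.tanh x ^ 2) * f x) * f x)) atTop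
      (𝓝 (∫ x, (g x ^ 2 + (deriv (deriv f) x + (1 - 2 * Real.tanh x ^ 2) * f x) * f x))) :=
    intervalIntegral_tendsto_integral (int_g_sq.add int_Phi) tendsto_neg_atTop_atBot tendsto_id
  have T2 : Tendsto (fun b : ℝ => W b - W (-b)) atTop (𝓝 0) := by
    have := WTop.sub (WBot.comp tendsto_neg_atTop_atBot)
    simpa using this
  have hG0 : (∫ x, (g x ^ 2 + (deriv (deriv f) x + (1 - 2 * Real.tanh x ^ 2) * f x) * f x)) = 0 :=
    tendsto_nhds_unique ((T1.congr (fun b => FTCW b)) :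
      Tendsto (fun b : ℝ => W b - W (-b)) atTop _) T2
  have key1 : (∫ x, g x ^ 2) =
      - ∫ x, (deriv (deriv f) x + (1 - 2 * Real.tanh x ^ 2) * f x) * f x := by
    rw [integral_add int_g_sq int_Phi] at hG0
    linarith
  -- Step 2 : Hardy inequality on each half line
  set D : ℝ → ℝ := fun x => (1/2) * v x ^ 2 + 2 * g x ^ 2 with hD_def
  have int_D : Integrable D := (int_v_sq.const_mul _).add (int_g_sq.const_mul _)
  have cD : Continuous D :=
    (continuous_const.mul (cv.pow 2)).add (continuous_const.mul (cg.pow 2))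
  have hD_nonneg : ∀ x, 0 ≤ D x := fun x => by positivity
  have hv0 : v 0 = 0 := by simp [hv_def, ha_def, Real.cosh_zero]
  -- right half
  set P : ℝ → ℝ := fun x => v x ^ 2 * (Real.cosh x * Real.exp (-x)) with hP_def
  have hdP : ∀ x, HasDerivAt P (v x * g x * (1 + Real.exp (-(2*x))) - v x ^ 2) x := by
    intro x
    have hv2 : HasDerivAt (fun y => v y ^ 2) (2 * v x * v1 x) x := by
      simpa [mul_comm, mul_assoc] using (hdv x).fun_pow 2
    have hexp : HasDerivAt (fun y : ℝ => Real.exp (-y)) (-Real.exp (-x)) x := by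
      simpa using ((hasDerivAt_id x).neg).exp
    have hce : HasDerivAt (fun y => Real.cosh y * Real.exp (-y))
        (Real.sinh x * Real.exp (-x) + Real.cosh x * -Real.exp (-x)) x :=
      (Real.hasDerivAt_cosh x).mul hexp
    have h := hv2.fun_mul hce
    refine h.congr_deriv ?_
    rw [hgv x]
    have hc := cosh_ne x
    have h1 : Real.exp x ≠ 0 := (Real.exp_pos x).ne'
    have h2 : Real.exp (-(2*x)) = (Real.exp x * Real.exp x)⁻¹ := by
      rw [← Real.exp_add, ← Real.exp_neg]; ring_nf
    rw [h2, Real.sinh_eq, Real.cosh_eq, Real.exp_neg]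
    field_simp
    ring
  have hP0 : P 0 = 0 := by simp [hP_def, hv0]
  have hP_nonneg : ∀ x, 0 ≤ P x := fun x => by
    have := (Real.cosh_pos x).le
    have := (Real.exp_pos (-x)).le
    positivity
  have cvg1 : Continuous (fun x => v x * g x * (1 + Real.exp (-(2*x)))) := by
    refine (cv.mul cg).mul (continuous_const.add (Real.continuous_exp.comp ?_))
    exact (continuous_const.mul continuous_id).neg
  have hIoi_v : (∫ x in Ioi (0:ℝ), v x ^ 2) ≤ ∫ x in Ioi (0:ℝ), D x := by
    refine le_of_tendsto (intervalIntegral_tendsto_integral_Ioi 0 int_v_sq.integrableOn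
      tendsto_id) ?_
    filter_upwards [eventually_ge_atTop (0:ℝ)] with b hb
    simp only [id_eq]
    have int1 : IntervalIntegrable (fun x => v x * g x * (1 + Real.exp (-(2*x)))) volume 0 b :=
      cvg1.intervalIntegrable _ _
    have int2 : IntervalIntegrable (fun x => v x ^ 2) volume 0 b :=
      (cv.pow 2).intervalIntegrable _ _
    have e1 : (∫ x in (0:ℝ)..b, v x * g x * (1 + Real.exp (-(2*x))))
        - (∫ x in (0:ℝ)..b, v x ^ 2) = P b - P 0 := by
      rw [← intervalIntegral.integral_sub int1 int2]
      exact intervalIntegral.integral_eq_sub_of_hasDerivAt (fun x _ => hdP x)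
        ((cvg1.sub (cv.pow 2)).intervalIntegrable _ _)
    have e2 : (∫ x in (0:ℝ)..b, v x * g x * (1 + Real.exp (-(2*x)))) ≤ ∫ x in (0:ℝ)..b, D x := by
      refine intervalIntegral.integral_mono_on hb int1 (cD.intervalIntegrable _ _) ?_
      intro x hx
      have hx0 : 0 ≤ x := hx.1
      have hex : Real.exp (-(2*x)) ≤ 1 := Real.exp_le_one_iff.mpr (by linarith)
      have hex0 : 0 < Real.exp (-(2*x)) := Real.exp_pos _
      simp only [hD_def]
      exact bound_right hex hex0
    have e3 : (∫ x in (0:ℝ)..b, D x) ≤ ∫ x in Ioi (0:ℝ), D x := by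
      rw [intervalIntegral.integral_of_le hb]
      refine setIntegral_mono_set int_D.integrableOn
        (Filter.Eventually.of_forall fun x => hD_nonneg x) ?_
      exact HasSubset.Subset.eventuallyLE Ioc_subset_Ioi_self
    have := hP0 ▸ e1
    linarith [hP_nonneg b]
  -- left half
  set Q : ℝ → ℝ := fun x => v x ^ 2 * (Real.cosh x * Real.exp x) with hQ_def
  have hdQ : ∀ x, HasDerivAt Q (v x * g x * (1 + Real.exp (2*x)) + v x ^ 2) x := by
    intro x
    have hv2 : HasDerivAt (fun y => v y ^ 2) (2 * v x * v1 x) x := by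
      simpa [mul_comm, mul_assoc] using (hdv x).fun_pow 2
    have hce : HasDerivAt (fun y => Real.cosh y * Real.exp y)
        (Real.sinh x * Real.exp x + Real.cosh x * Real.exp x) x :=
      (Real.hasDerivAt_cosh x).mul (Real.hasDerivAt_exp x)
    have h := hv2.fun_mul hce
    refine h.congr_deriv ?_
    rw [hgv x]
    have hc := cosh_ne x
    have h1 : Real.exp x ≠ 0 := (Real.exp_pos x).ne'
    have h2 : Real.exp (2*x) = Real.exp x * Real.exp x := by
      rw [← Real.exp_add]; ring_nf
    rw [h2, Real.sinh_eq, Real.cosh_eq, Real.exp_neg]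
    field_simp
    ring
  have hQ0 : Q 0 = 0 := by simp [hQ_def, hv0]
  have hQ_nonneg : ∀ x, 0 ≤ Q x := fun x => by
    have := (Real.cosh_pos x).le
    have := (Real.exp_pos x).le
    positivity
  have cvg2 : Continuous (fun x => v x * g x * (1 + Real.exp (2*x))) := by
    refine (cv.mul cg).mul (continuous_const.add (Real.continuous_exp.comp ?_))
    exact continuous_const.mul continuous_id
  have hIic_v : (∫ x in Iic (0:ℝ), v x ^ 2) ≤ ∫ x in Iic (0:ℝ), D x := by
    refine le_of_tendsto (intervalIntegral_tendsto_integral_Iic 0 int_v_sq.integrableOn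
      tendsto_neg_atTop_atBot) ?_
    filter_upwards [eventually_ge_atTop (0:ℝ)] with b hb
    have int1 : IntervalIntegrable (fun x => v x * g x * (1 + Real.exp (2*x))) volume (-b) 0 :=
      cvg2.intervalIntegrable _ _
    have int2 : IntervalIntegrable (fun x => v x ^ 2) volume (-b) 0 :=
      (cv.pow 2).intervalIntegrable _ _
    have hb' : (-b : ℝ) ≤ 0 := by linarith
    have e1 : (∫ x in (-b)..(0:ℝ), v x * g x * (1 + Real.exp (2*x)))
        + (∫ x in (-b)..(0:ℝ), v x ^ 2) = Q 0 - Q (-b) := by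
      rw [← intervalIntegral.integral_add int1 int2]
      exact intervalIntegral.integral_eq_sub_of_hasDerivAt (fun x _ => hdQ x)
        ((cvg2.add (cv.pow 2)).intervalIntegrable _ _)
    have e2' : - (∫ x in (-b)..(0:ℝ), v x * g x * (1 + Real.exp (2*x))) ≤
        ∫ x in (-b)..(0:ℝ), D x := by
      rw [← intervalIntegral.integral_neg]
      refine intervalIntegral.integral_mono_on hb' (int1.neg) (cD.intervalIntegrable _ _) ?_
      intro x hx
      have hx0 : x ≤ 0 := hx.2
      have hex : Real.exp (2*x) ≤ 1 := Real.exp_le_one_iff.mpr (by linarith)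
      have hex0 : 0 < Real.exp (2*x) := Real.exp_pos _
      simp only [hD_def, Pi.neg_apply]
      exact bound_left hex hex0
    have e3 : (∫ x in (-b)..(0:ℝ), D x) ≤ ∫ x in Iic (0:ℝ), D x := by
      rw [intervalIntegral.integral_of_le hb']
      refine setIntegral_mono_set int_D.integrableOn
        (Filter.Eventually.of_forall fun x => hD_nonneg x) ?_
      refine HasSubset.Subset.eventuallyLE ?_
      exact Ioc_subset_Iic_self
    have := hQ0 ▸ e1
    linarith [hQ_nonneg (-b)]
  -- combine the two halves
  have hv_le : (∫ x, v x ^ 2) ≤ 4 * ∫ x, g x ^ 2 := by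
    have hsplit : (∫ x in Iic (0:ℝ), v x ^ 2) + (∫ x in Ioi (0:ℝ), v x ^ 2) = ∫ x, v x ^ 2 :=
      intervalIntegral.integral_Iic_add_Ioi int_v_sq.integrableOn int_v_sq.integrableOn
    have hsplitD : (∫ x in Iic (0:ℝ), D x) + (∫ x in Ioi (0:ℝ), D x) = ∫ x, D x :=
      intervalIntegral.integral_Iic_add_Ioi int_D.integrableOn int_D.integrableOn
    have hDval : (∫ x, D x) = (1/2) * (∫ x, v x ^ 2) + 2 * ∫ x, g x ^ 2 := by
      rw [hD_def]
      rw [integral_add (int_v_sq.const_mul (1/2 : ℝ)) (int_g_sq.const_mul (2:ℝ)),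
        integral_const_mul, integral_const_mul]
    linarith
  -- Step 3 : orthogonality
  have hf_le_v : (∫ x, f x ^ 2) ≤ ∫ x, v x ^ 2 := by
    have hint1 : Integrable (fun x => f x * (1 / Real.cosh x)) :=
      integrable_mul_L2 hL2 memLp_sech
    have hint2 : Integrable (fun x => (1 / Real.cosh x) ^ 2) := integrable_sech_sq
    have hexp : (∫ x, v x ^ 2) = (∫ x, f x ^ 2) - 2 * a * (∫ x, f x * (1 / Real.cosh x))
        + a ^ 2 * ∫ x, (1 / Real.cosh x) ^ 2 := by
      have hpt : ∀ x, v x ^ 2 = (f x ^ 2 - 2 * a * (f x * (1 / Real.cosh x)))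
          + a ^ 2 * (1 / Real.cosh x) ^ 2 := by
        intro x; simp only [hv_def]; ring
      rw [integral_congr_ae (Filter.Eventually.of_forall hpt)]
      have intA : Integrable (fun x => f x ^ 2 - 2 * a * (f x * (1 / Real.cosh x))) volume :=
        int_f_sq.sub (hint1.const_mul (2*a))
      have intB : Integrable (fun x => a ^ 2 * (1 / Real.cosh x) ^ 2) volume :=
        hint2.const_mul (a^2)
      rw [integral_add intA intB,
        integral_sub int_f_sq (hint1.const_mul (2*a)), integral_const_mul, integral_const_mul]
    rw [hexp, horth]
    have hnn : 0 ≤ ∫ x, (1 / Real.cosh x) ^ 2 :=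
      integral_nonneg fun x => sq_nonneg _
    nlinarith [sq_nonneg a]
  linarith [key1, hv_le, hf_le_v]
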